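/- Every linear relation L : k^m ⇸ k^n can be factored as L = G† ∘ F for some linear maps F : k^m → k^r and G : k^n → k^r (with graphs regarded as relations), i.e. L = {(u,v) : F u = G v}. Conversely every relation of the form {(u,v) : F u = G v} is a linear relation. -/
import Mathlib


/-- Every linear relation `L : k^m ⇸ k^n` factors as `L = {(u,v) : F u = G v}`
for some linear maps `F : k^m → k^r`, `G : k^n → k^r`; conversely every set of
that form is a linear relation (a linear subspace of `k^m × k^n`). -/
theorem linear_relation_factorization (k : Type*) [Field k] (m n : ℕ)
    (L : Submodule k ((Fin m → k) × (Fin n → k))) :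
    (∃ (r : ℕ) (F : (Fin m → k) →ₗ[k] (Fin r → k))
        (G : (Fin n → k) →ₗ[k] (Fin r → k)),
      (L : Set ((Fin m → k) × (Fin n → k))) = {p | F p.1 = G p.2}) ∧
    (∀ (r : ℕ) (F : (Fin m → k) →ₗ[k] (Fin r → k))
        (G : (Fin n → k) →ₗ[k] (Fin r → k)),
      ∃ L' : Submodule k ((Fin m → k) × (Fin n → k)),
        (L' : Set ((Fin m → k) × (Fin n → k))) = {p | F p.1 = G p.2}) := by
  constructor
  · set V := ((Fin m → k) × (Fin n → k)) ⧸ L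
    have : FiniteDimensional k V := inferInstance
    set r := Module.finrank k V
    let e : V ≃ₗ[k] (Fin r → k) := (Module.finBasis k V).equivFun
    let q : ((Fin m → k) × (Fin n → k)) →ₗ[k] V := L.mkQ
    let F : (Fin m → k) →ₗ[k] (Fin r → k) :=
      (e : V →ₗ[k] (Fin r → k)) ∘ₗ q ∘ₗ (LinearMap.inl k _ _)
    let G : (Fin n → k) →ₗ[k] (Fin r → k) :=
      -((e : V →ₗ[k] (Fin r → k)) ∘ₗ q ∘ₗ (LinearMap.inr k _ _))
    refine ⟨r, F, G, ?_⟩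
    ext ⟨u, v⟩
    simp only [SetLike.mem_coe, Set.mem_setOf_eq, F, G, LinearMap.neg_apply,
      LinearMap.comp_apply, LinearMap.inl_apply, LinearMap.inr_apply,
      LinearEquiv.coe_coe]
    rw [eq_neg_iff_add_eq_zero, ← e.map_add, ← q.map_add]
    have h : (u, (0 : Fin n → k)) + (0, v) = (u, v) := by simp
    rw [h, e.map_eq_zero_iff, Submodule.mkQ_apply, Submodule.Quotient.mk_eq_zero]
  · intro r F G
    refine ⟨LinearMap.ker (F ∘ₗ LinearMap.fst k _ _ - G ∘ₗ LinearMap.snd k _ _), ?_⟩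
    ext ⟨u, v⟩
    simp [sub_eq_zero]
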